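/- arXiv:2409.16141 — 2 statements merged into one kernel-verified Lean document; each statement's English description precedes it below -/
import Mathlib

section
/- For every set T ⊆ ℂ of prime cardinality |T| = p and every positive integer D, there exist n ≥ 1 and a p-ary function f : T^n → T with deg(f) > D and s(f)^2 / (p-1)^3 ≤ deg(f). -/
open scoped Classical

noncomputable section

/-- `F` represents the `m`-ary function `f : T^n → T` if it agrees with `f` on `T^n`. -/
def Represents (T : Finset ℂ) (n : ℕ) (F : MvPolynomial (Fin n) ℂ)
    (f : (Fin n → ↥T) → ↥T) : Prop :=
  ∀ x : Fin n → ↥T, MvPolynomial.eval (fun i => (x i : ℂ)) F = (f x : ℂ)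

/-- The degree of an `m`-ary function: the minimum total degree of a representing polynomial. -/
def degreeF (T : Finset ℂ) (n : ℕ) (f : (Fin n → ↥T) → ↥T) : ℕ :=
  sInf {d | ∃ F : MvPolynomial (Fin n) ℂ, Represents T n F f ∧ F.totalDegree = d}

/-- Local sensitivity of `f` at `x`: the number of `y` differing from `x` in exactly one
entry with `f y ≠ f x`. -/
def localSens (T : Finset ℂ) (n : ℕ) (f : (Fin n → ↥T) → ↥T) (x : Fin n → ↥T) : ℕ :=
  (Finset.univ.filter fun y : Fin n → ↥T => hammingDist x y = 1 ∧ f y ≠ f x).card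

/-- Sensitivity of `f`. -/
def sens (T : Finset ℂ) (n : ℕ) (f : (Fin n → ↥T) → ↥T) : ℕ :=
  Finset.univ.sup (localSens T n f)

section AuxSens

open Polynomial Finset

/-! ### Univariate weights and the key vanishing functional -/

/-- The Lagrange nodal weight `1 / ∏_{c ∈ T, c ≠ t} (t - c)`. -/
def wt (T : Finset ℂ) (t : ℂ) : ℂ := Lagrange.nodalWeight T id t

lemma wt_ne_zero (T : Finset ℂ) {t : ℂ} (ht : t ∈ T) : wt T t ≠ 0 :=
  Lagrange.nodalWeight_ne_zero (Set.injOn_id _) ht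

lemma basis_coeff (T : Finset ℂ) {t : ℂ} (ht : t ∈ T) :
    (Lagrange.basis T id t).coeff (T.card - 1) = wt T t := by
  have hb : Lagrange.basis T id t =
      Polynomial.C (Lagrange.nodalWeight T id t) * Lagrange.nodal (T.erase t) id := by
    simp_rw [Lagrange.basis, Lagrange.basisDivisor, Lagrange.nodalWeight, Lagrange.nodal,
      Finset.prod_mul_distrib, map_prod]
  rw [hb, Polynomial.coeff_C_mul]
  have hd : (Lagrange.nodal (T.erase t) id).natDegree = T.card - 1 := by
    rw [Lagrange.natDegree_nodal, Finset.card_erase_of_mem ht]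
  rw [← hd, (Lagrange.nodal_monic).coeff_natDegree, mul_one, wt]

lemma key_univ (T : Finset ℂ) {e : ℕ} (he : e < T.card - 1) :
    ∑ t ∈ T, t ^ e * wt T t = 0 := by
  have hcard : (e : WithBot ℕ) < T.card := by
    exact_mod_cast Nat.lt_of_lt_of_le he (Nat.sub_le _ _)
  have h := Lagrange.eq_interpolate (s := T) (v := id) (Set.injOn_id _)
      (f := (Polynomial.X : ℂ[X]) ^ e) (by simpa [Polynomial.degree_X_pow] using hcard)
  have h2 := congrArg (fun q : ℂ[X] => q.coeff (T.card - 1)) h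
  simp only [Lagrange.interpolate_apply, Polynomial.finset_sum_coeff,
    Polynomial.coeff_C_mul, Polynomial.coeff_X_pow, Polynomial.eval_pow, Polynomial.eval_X,
    id_eq] at h2
  have : (if T.card - 1 = e then (1:ℂ) else 0) = 0 := by
    rw [if_neg]; omega
  rw [this] at h2
  rw [Finset.sum_congr rfl fun t ht => by rw [basis_coeff T ht]] at h2
  exact h2.symm

lemma key_univ' (T : Finset ℂ) {e : ℕ} (he : e < T.card - 1) :
    ∑ t : ↥T, wt T ↑t * (t : ℂ) ^ e = 0 := by
  rw [Finset.sum_coe_sort T (fun t => wt T t * t ^ e)]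
  rw [← key_univ T he]
  exact Finset.sum_congr rfl fun t _ => mul_comm _ _

lemma sum_wt_zero (T : Finset ℂ) (h2 : 2 ≤ T.card) : ∑ t : ↥T, wt T ↑t = 0 := by
  have := key_univ' T (e := 0) (by omega)
  simpa using this

/-- The weighted sum over the grid of any polynomial of low total degree vanishes. -/
lemma sum_wt_eval_eq_zero (T : Finset ℂ) {n : ℕ} (F : MvPolynomial (Fin n) ℂ)
    (hdeg : F.totalDegree < n * (T.card - 1)) :
    ∑ x : Fin n → ↥T, (∏ j, wt T (x j)) * MvPolynomial.eval (fun i => (x i : ℂ)) F = 0 := by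
  simp only [MvPolynomial.eval_eq' (fun i => _) F]
  have step1 : ∀ x : Fin n → ↥T,
      (∏ j, wt T (x j)) * ∑ d ∈ F.support, MvPolynomial.coeff d F * ∏ i, ((x i : ℂ)) ^ d i
      = ∑ d ∈ F.support, MvPolynomial.coeff d F * ∏ j, (wt T (x j) * ((x j : ℂ)) ^ d j) := by
    intro x
    rw [Finset.mul_sum]
    refine Finset.sum_congr rfl fun d _ => ?_
    rw [Finset.prod_mul_distrib]
    ring
  simp only [step1]
  rw [Finset.sum_comm]
  refine Finset.sum_eq_zero fun d hd => ?_
  rw [← Finset.mul_sum]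
  have hfact : ∑ x : Fin n → ↥T, ∏ j, (wt T (x j) * ((x j : ℂ)) ^ d j)
      = ∏ j, ∑ t : ↥T, (wt T ↑t * (t : ℂ) ^ d j) := by
    rw [Finset.prod_univ_sum (fun _ => (Finset.univ : Finset ↥T)) (fun j t => wt T ↑t * (t:ℂ) ^ d j)]
    rw [Fintype.piFinset_univ]
  rw [hfact]
  have hex : ∃ j, d j < T.card - 1 := by
    by_contra hall
    push_neg at hall
    have h1 : n * (T.card - 1) ≤ ∑ j, d j := by
      calc n * (T.card - 1) = ∑ _j : Fin n, (T.card - 1) := by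
            rw [Finset.sum_const, card_univ, Fintype.card_fin, smul_eq_mul]
        _ ≤ ∑ j, d j := Finset.sum_le_sum fun j _ => hall j
    have h2 : ∑ j, d j ≤ F.totalDegree := by
      have := MvPolynomial.le_totalDegree hd
      rwa [Finsupp.sum_fintype _ _ (fun _ => rfl)] at this
    omega
  obtain ⟨j0, hj0⟩ := hex
  rw [Finset.prod_eq_zero (Finset.mem_univ j0) (key_univ' T hj0), mul_zero]

/-! ### Every function on the grid is represented by some polynomial -/

def uni (T : Finset ℂ) (n : ℕ) (j : Fin n) (t : ℂ) : MvPolynomial (Fin n) ℂ :=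
  Polynomial.eval₂ MvPolynomial.C (MvPolynomial.X j) (Lagrange.basis T id t)

lemma eval_uni (T : Finset ℂ) (n : ℕ) (j : Fin n) (t : ℂ) (v : Fin n → ℂ) :
    MvPolynomial.eval v (uni T n j t) = (Lagrange.basis T id t).eval (v j) := by
  unfold uni
  rw [Polynomial.hom_eval₂]
  have h1 : (MvPolynomial.eval v).comp (MvPolynomial.C (σ := Fin n)) = RingHom.id ℂ := by
    ext r; simp
  simp only [MvPolynomial.eval_X, h1]
  rfl

lemma exists_represents (T : Finset ℂ) (n : ℕ) (f : (Fin n → ↥T) → ↥T) :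
    ∃ F, Represents T n F f := by
  refine ⟨∑ y : Fin n → ↥T, MvPolynomial.C (f y : ℂ) * ∏ j, uni T n j ↑(y j), fun x => ?_⟩
  rw [map_sum]
  have hterm : ∀ y : Fin n → ↥T,
      MvPolynomial.eval (fun i => (x i : ℂ)) (MvPolynomial.C ((f y : ℂ)) * ∏ j, uni T n j ↑(y j))
      = (f y : ℂ) * (if y = x then 1 else 0) := by
    intro y
    rw [map_mul, MvPolynomial.eval_C, map_prod]
    congr 1
    simp only [eval_uni]
    by_cases h : y = x
    · subst h
      rw [if_pos rfl]
      refine Finset.prod_eq_one fun j _ => ?_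
      exact Lagrange.eval_basis_self (Set.injOn_id _) (y j).2
    · rw [if_neg h]
      obtain ⟨j, hj⟩ : ∃ j, y j ≠ x j := by
        by_contra hc; push_neg at hc; exact h (funext hc)
      refine Finset.prod_eq_zero (Finset.mem_univ j) ?_
      have : (↑(y j) : ℂ) ≠ ↑(x j) := fun hh => hj (Subtype.coe_injective hh)
      exact Lagrange.eval_basis_of_ne (v := id) this (x j).2
  simp only [hterm]
  simp [Finset.sum_ite_eq' Finset.univ x (fun y => ((f y : ℂ)))]

/-! ### The block construction -/

def fconstr (T : Finset ℂ) (a b : ↥T) (k : ℕ) : (Fin (k * k) → ↥T) → ↥T :=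
  fun x => if ∀ i : Fin k, ∃ j : Fin k, x (finProdFinEquiv (i, j)) ≠ a then b else a

def blockE (T : Finset ℂ) (k : ℕ) : (Fin k → Fin k → ↥T) ≃ (Fin (k * k) → ↥T) :=
  (Equiv.curry (Fin k) (Fin k) ↥T).symm.trans
    ((finProdFinEquiv : Fin k × Fin k ≃ Fin (k * k)).arrowCongr (Equiv.refl ↥T))

lemma blockE_apply (T : Finset ℂ) (k : ℕ) (y : Fin k → Fin k → ↥T) (i j : Fin k) :
    blockE T k y (finProdFinEquiv (i, j)) = y i j := by
  simp [blockE, Equiv.arrowCongr, Equiv.curry]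

lemma prod_indicator' {ι : Type*} [Fintype ι] (Q : ι → Prop) :
    ∏ i, (if Q i then (1:ℂ) else 0) = if ∀ i, Q i then 1 else 0 := by
  by_cases h : ∀ i, Q i
  · rw [if_pos h]; exact Finset.prod_eq_one fun i _ => if_pos (h i)
  · rw [if_neg h]
    push_neg at h
    obtain ⟨i0, hi0⟩ := h
    exact Finset.prod_eq_zero (Finset.mem_univ i0) (if_neg hi0)

lemma sum_wt_f_ne_zero (T : Finset ℂ) (h2 : 2 ≤ T.card) (a b : ↥T) (hab : a ≠ b)
    {k : ℕ} (hk : 0 < k) :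
    ∑ x : Fin (k * k) → ↥T, (∏ m, wt T (x m)) * ((fconstr T a b k x : ℂ)) ≠ 0 := by
  set g : (Fin (k * k) → ↥T) → ℂ := fun x => (∏ m, wt T (x m)) * ((fconstr T a b k x : ℂ))
    with hg
  rw [← Equiv.sum_comp (blockE T k) g]
  have hterm : ∀ y : Fin k → Fin k → ↥T,
      g (blockE T k y) = (∏ i, ∏ j, wt T (y i j)) *
        ((a : ℂ) + ((b : ℂ) - a) * ∏ i, (if y i ≠ (fun _ => a) then (1:ℂ) else 0)) := by
    intro y
    have hW : (∏ m, wt T ((blockE T k y) m)) = ∏ i, ∏ j, wt T (y i j) := by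
      rw [← Equiv.prod_comp (finProdFinEquiv : Fin k × Fin k ≃ Fin (k * k))
        (fun m => wt T ((blockE T k y) m))]
      rw [← Fintype.prod_prod_type']
      exact Finset.prod_congr rfl fun q _ => by rw [blockE_apply T k y q.1 q.2]
    have hF : ((fconstr T a b k (blockE T k y) : ℂ))
        = (a : ℂ) + ((b : ℂ) - a) * ∏ i, (if y i ≠ (fun _ => a) then (1:ℂ) else 0) := by
      unfold fconstr
      have hiff : (∀ i : Fin k, ∃ j : Fin k, (blockE T k y) (finProdFinEquiv (i, j)) ≠ a)
          ↔ ∀ i, y i ≠ (fun _ => a) := by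
        refine forall_congr' fun i => ?_
        simp only [blockE_apply]
        constructor
        · rintro ⟨j, hj⟩ hc; exact hj (by rw [hc])
        · intro hne
          by_contra hc; push_neg at hc
          exact hne (funext hc)
      rw [apply_ite (fun t : ↥T => (t : ℂ)), if_congr hiff rfl rfl]
      by_cases h : ∀ i, y i ≠ (fun _ => a)
      · rw [if_pos h, Finset.prod_congr rfl (fun i _ => if_pos (h i)), Finset.prod_const_one]
        ring
      · rw [if_neg h]
        push_neg at h
        obtain ⟨i0, hi0⟩ := h
        have hz0 : (∏ i : Fin k, if y i ≠ (fun _ => a) then (1:ℂ) else 0) = 0 :=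
          Finset.prod_eq_zero (Finset.mem_univ i0) (if_neg (not_not.mpr hi0))
        rw [hz0]
        ring
    rw [hg]; dsimp only; rw [hW, hF]
  rw [Finset.sum_congr rfl fun y _ => hterm y]
  have expand : ∀ y : Fin k → Fin k → ↥T,
      (∏ i, ∏ j, wt T (y i j)) *
        ((a : ℂ) + ((b : ℂ) - a) * ∏ i, (if y i ≠ (fun _ => a) then (1:ℂ) else 0))
      = (a : ℂ) * ∏ i, (∏ j, wt T (y i j))
        + ((b : ℂ) - a) * ∏ i, ((if y i ≠ (fun _ => a) then (1:ℂ) else 0) * ∏ j, wt T (y i j)) := by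
    intro y
    rw [Finset.prod_mul_distrib]
    ring
  rw [Finset.sum_congr rfl fun y _ => expand y]
  rw [Finset.sum_add_distrib, ← Finset.mul_sum, ← Finset.mul_sum]
  have hfact1 : (∑ y : Fin k → Fin k → ↥T, ∏ i, (∏ j, wt T (y i j)))
      = ∏ i : Fin k, (∑ z : Fin k → ↥T, ∏ j, wt T (z j)) := by
    rw [Finset.prod_univ_sum (fun _ => (Finset.univ : Finset (Fin k → ↥T)))
      (fun _ z => ∏ j, wt T (z j)), Fintype.piFinset_univ]
  have hblocksum : (∑ z : Fin k → ↥T, ∏ j : Fin k, wt T ↑(z j)) = 0 := by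
    have hz : (∑ z : Fin k → ↥T, ∏ j : Fin k, wt T ↑(z j)) = ∏ _j : Fin k, ∑ t : ↥T, wt T ↑t := by
      rw [Finset.prod_univ_sum (fun _ => (Finset.univ : Finset ↥T)) (fun _ t => wt T ↑t),
        Fintype.piFinset_univ]
    rw [hz, sum_wt_zero T h2, Finset.prod_const, Finset.card_univ, Fintype.card_fin,
      zero_pow hk.ne']
  rw [hfact1, hblocksum, Finset.prod_const, Finset.card_univ, Fintype.card_fin, zero_pow hk.ne',
    mul_zero, zero_add]
  have hfact2 : (∑ y : Fin k → Fin k → ↥T,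
      ∏ i, ((if y i ≠ (fun _ => a) then (1:ℂ) else 0) * ∏ j : Fin k, wt T ↑(y i j)))
      = ∏ _i : Fin k, (∑ z : Fin k → ↥T,
          ((if z ≠ (fun _ => a) then (1:ℂ) else 0) * ∏ j : Fin k, wt T ↑(z j))) := by
    rw [Finset.prod_univ_sum (fun _ => (Finset.univ : Finset (Fin k → ↥T)))
      (fun _ z => (if z ≠ (fun _ => a) then (1:ℂ) else 0) * ∏ j : Fin k, wt T ↑(z j)),
      Fintype.piFinset_univ]
  rw [hfact2]
  have hH : (∑ z : Fin k → ↥T,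
      ((if z ≠ (fun _ => a) then (1:ℂ) else 0) * ∏ j : Fin k, wt T ↑(z j)))
      = -(wt T ↑a) ^ k := by
    have hsplit : ∀ z : Fin k → ↥T,
        ((if z ≠ (fun _ => a) then (1:ℂ) else 0) * ∏ j : Fin k, wt T ↑(z j))
        = (∏ j : Fin k, wt T ↑(z j)) - (if z = (fun _ => a) then ∏ j : Fin k, wt T ↑(z j) else 0) := by
      intro z
      by_cases h : z = (fun _ => a)
      · rw [if_neg (by simpa using h), if_pos h]; ring
      · rw [if_pos h, if_neg h]; ring
    rw [Finset.sum_congr rfl fun z _ => hsplit z, Finset.sum_sub_distrib, hblocksum]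
    rw [Finset.sum_ite_eq' Finset.univ (fun _ => a) (fun z => ∏ j : Fin k, wt T ↑(z j))]
    simp [Finset.prod_const]
  rw [hH, Finset.prod_const]
  have hwa : wt T ↑a ≠ 0 := wt_ne_zero T a.2
  have hba : (b : ℂ) - a ≠ 0 := sub_ne_zero_of_ne fun h => hab (Subtype.coe_injective h).symm
  exact mul_ne_zero hba (pow_ne_zero _ (neg_ne_zero.mpr (pow_ne_zero _ hwa)))

lemma hamming_one {n : ℕ} {β : Type*} [DecidableEq β] {x y : Fin n → β}
    (h : hammingDist x y = 1) :
    ∃ j0, x j0 ≠ y j0 ∧ ∀ m, m ≠ j0 → x m = y m := by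
  have h' : ({i | x i ≠ y i} : Finset (Fin n)).card = 1 := h
  obtain ⟨j0, hj0⟩ := Finset.card_eq_one.mp h'
  refine ⟨j0, ?_, ?_⟩
  · have : j0 ∈ ({i | x i ≠ y i} : Finset (Fin n)) := by rw [hj0]; exact Finset.mem_singleton_self _
    simpa using this
  · intro m hm
    by_contra hc
    have : m ∈ ({i | x i ≠ y i} : Finset (Fin n)) := by simpa using hc
    rw [hj0, Finset.mem_singleton] at this
    exact hm this

lemma localSens_fconstr_le (T : Finset ℂ) (h2 : 2 ≤ T.card) (a b : ↥T) {k : ℕ} (hk : 0 < k)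
    (x : Fin (k * k) → ↥T) :
    (Finset.univ.filter fun y : Fin (k * k) → ↥T =>
      hammingDist x y = 1 ∧ fconstr T a b k y ≠ fconstr T a b k x).card ≤ k * (T.card - 1) := by
  set Pr : (Fin (k * k) → ↥T) → Prop :=
    fun z => ∀ i : Fin k, ∃ j : Fin k, z (finProdFinEquiv (i, j)) ≠ a with hPr
  have hfP : ∀ z, fconstr T a b k z = if Pr z then b else a := fun z => rfl
  set S := Finset.univ.filter fun y : Fin (k * k) → ↥T =>
      hammingDist x y = 1 ∧ fconstr T a b k y ≠ fconstr T a b k x with hS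
  have heta : ∀ q : Fin (k * k),
      finProdFinEquiv ((finProdFinEquiv.symm q).1, (finProdFinEquiv.symm q).2) = q := fun q => by
    rw [Prod.mk.eta, Equiv.apply_symm_apply]
  by_cases hPx : Pr x
  · -- f x = b; sensitive moves make some block all-a; at most one per block
    have key : ∀ y ∈ S, ∃ (i1 jj : Fin k),
        (∀ j, y (finProdFinEquiv (i1, j)) = a) ∧
        x (finProdFinEquiv (i1, jj)) ≠ y (finProdFinEquiv (i1, jj)) ∧
        (∀ m, m ≠ finProdFinEquiv (i1, jj) → x m = y m) := by
      intro y hy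
      rw [hS, Finset.mem_filter] at hy
      obtain ⟨-, hham, hne⟩ := hy
      obtain ⟨j0, hj0ne, hj0eq⟩ := hamming_one hham
      have hPy : ¬ Pr y := by
        intro hPy
        rw [hfP, hfP, if_pos hPy, if_pos hPx] at hne
        exact hne rfl
      simp only [hPr] at hPy
      push_neg at hPy
      obtain ⟨i1, hi1⟩ := hPy
      -- j0 must lie in block i1
      have hj0blk : (finProdFinEquiv.symm j0).1 = i1 := by
        by_contra hcne
        obtain ⟨j, hj⟩ := hPx i1
        apply hj
        rw [hj0eq (finProdFinEquiv (i1, j)) ?_]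
        · exact hi1 j
        · intro hc
          apply hcne
          rw [← hc, Equiv.symm_apply_apply]
      refine ⟨i1, (finProdFinEquiv.symm j0).2, hi1, ?_, ?_⟩
      · have : finProdFinEquiv ((i1 : Fin k), (finProdFinEquiv.symm j0).2) = j0 := by
          rw [← hj0blk]; exact heta j0
        rw [this]; exact hj0ne
      · intro m hm
        apply hj0eq
        intro hc
        apply hm
        rw [hc, ← hj0blk, heta j0]
    -- each sensitive y is `update x (block i1's chosen coord) a`
    have hsub : S ⊆ Finset.image
        (fun i : Fin k => Function.update x (finProdFinEquiv (i, (hPx i).choose)) a)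
        Finset.univ := by
      intro y hy
      obtain ⟨i1, jj, hall, hdiff, hrest⟩ := key y hy
      rw [Finset.mem_image]
      refine ⟨i1, Finset.mem_univ _, ?_⟩
      have hxj : ∀ j : Fin k, j ≠ jj → x (finProdFinEquiv (i1, j)) = a := by
        intro j hj
        rw [hrest (finProdFinEquiv (i1, j)) (fun hc => hj (by
          have := congrArg (fun q => (finProdFinEquiv.symm q).2) hc
          simpa using this))]
        exact hall j
      have hchoose : (hPx i1).choose = jj := by
        by_contra hc
        exact (hPx i1).choose_spec (hxj _ hc)
      rw [hchoose]
      funext m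
      by_cases hm : m = finProdFinEquiv (i1, jj)
      · rw [hm, Function.update_self, hall jj]
      · rw [Function.update_of_ne hm]
        exact hrest m hm
    calc S.card ≤ _ := Finset.card_le_card hsub
      _ ≤ (Finset.univ : Finset (Fin k)).card := Finset.card_image_le
      _ = k := by rw [Finset.card_univ, Fintype.card_fin]
      _ ≤ k * (T.card - 1) := Nat.le_mul_of_pos_right k (by omega)
  · -- f x = a; x has an all-a block i0; sensitive moves happen inside block i0
    have hPxneg : ¬ Pr x := hPx
    simp only [hPr] at hPx
    push_neg at hPx
    obtain ⟨i0, hi0⟩ := hPx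
    have key : ∀ y ∈ S, ∃ (jj : Fin k) (v : ↥T), v ≠ a ∧
        y = Function.update x (finProdFinEquiv (i0, jj)) v := by
      intro y hy
      rw [hS, Finset.mem_filter] at hy
      obtain ⟨-, hham, hne⟩ := hy
      obtain ⟨j0, hj0ne, hj0eq⟩ := hamming_one hham
      have hPy : Pr y := by
        by_contra hPy
        rw [hfP, hfP, if_neg hPy, if_neg hPxneg] at hne
        exact hne rfl
      have hj0blk : (finProdFinEquiv.symm j0).1 = i0 := by
        by_contra hcne
        obtain ⟨j, hj⟩ := hPy i0
        apply hj
        rw [← hj0eq (finProdFinEquiv (i0, j)) ?_]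
        · exact hi0 j
        · intro hc
          apply hcne
          rw [← hc, Equiv.symm_apply_apply]
      refine ⟨(finProdFinEquiv.symm j0).2, y j0, ?_, ?_⟩
      · have hxa : x j0 = a := by
          have : finProdFinEquiv ((i0 : Fin k), (finProdFinEquiv.symm j0).2) = j0 := by
            rw [← hj0blk]; exact heta j0
          rw [← this]; exact hi0 _
        rw [← hxa]
        exact fun hc => hj0ne hc.symm
      · have hj0' : finProdFinEquiv ((i0 : Fin k), (finProdFinEquiv.symm j0).2) = j0 := by
          rw [← hj0blk]; exact heta j0
        rw [hj0']
        funext m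
        by_cases hm : m = j0
        · rw [hm, Function.update_self]
        · rw [Function.update_of_ne hm]
          exact (hj0eq m hm).symm
    have hsub : S ⊆ Finset.image
        (fun q : Fin k × ↥T => Function.update x (finProdFinEquiv (i0, q.1)) q.2)
        ((Finset.univ : Finset (Fin k)) ×ˢ ((Finset.univ : Finset ↥T).erase a)) := by
      intro y hy
      obtain ⟨jj, v, hva, hyeq⟩ := key y hy
      rw [Finset.mem_image]
      exact ⟨(jj, v), Finset.mem_product.mpr ⟨Finset.mem_univ _,
        Finset.mem_erase.mpr ⟨hva, Finset.mem_univ _⟩⟩, hyeq.symm⟩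
    calc S.card ≤ _ := Finset.card_le_card hsub
      _ ≤ ((Finset.univ : Finset (Fin k)) ×ˢ ((Finset.univ : Finset ↥T).erase a)).card :=
          Finset.card_image_le
      _ = k * (T.card - 1) := by
          rw [Finset.card_product, Finset.card_univ, Fintype.card_fin,
            Finset.card_erase_of_mem (Finset.mem_univ _), Finset.card_univ, Fintype.card_coe]

end AuxSens

theorem stmt17 (p : ℕ) (hp : p.Prime) (T : Finset ℂ) (hT : T.card = p)
    (D : ℕ) (hD : 0 < D) :
    ∃ n : ℕ, 1 ≤ n ∧ ∃ f : (Fin n → ↥T) → ↥T,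
      D < degreeF T n f ∧
      (sens T n f : ℝ) ^ 2 / ((p : ℝ) - 1) ^ 3 ≤ (degreeF T n f : ℝ) := by
  have hp2 : 2 ≤ p := hp.two_le
  have hT2 : 2 ≤ T.card := by omega
  obtain ⟨a', ha', b', hb', hab'⟩ := Finset.one_lt_card.mp (by omega : 1 < T.card)
  set a : ↥T := ⟨a', ha'⟩
  set b : ↥T := ⟨b', hb'⟩
  have hab : a ≠ b := fun h => hab' (congrArg Subtype.val h)
  set k : ℕ := D + 1 with hk
  have hk0 : 0 < k := Nat.succ_pos D
  refine ⟨k * k, by nlinarith, fconstr T a b k, ?_, ?_⟩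
  all_goals {
    have hS : degreeF T (k * k) (fconstr T a b k) ∈
        {d | ∃ F : MvPolynomial (Fin (k * k)) ℂ,
          Represents T (k * k) F (fconstr T a b k) ∧ F.totalDegree = d} :=
      Nat.sInf_mem (by
        obtain ⟨F, hF⟩ := exists_represents T (k * k) (fconstr T a b k)
        exact ⟨_, F, hF, rfl⟩)
    obtain ⟨F, hrep, hdeg⟩ := hS
    have hlow : k * k * (T.card - 1) ≤ degreeF T (k * k) (fconstr T a b k) := by
      by_contra hc
      push_neg at hc
      have hvan := sum_wt_eval_eq_zero T F (by omega)
      rw [Finset.sum_congr rfl fun x _ => by rw [hrep x]] at hvan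
      exact sum_wt_f_ne_zero T hT2 a b hab hk0 hvan
    have hsens : sens T (k * k) (fconstr T a b k) ≤ k * (T.card - 1) :=
      Finset.sup_le fun x _ => localSens_fconstr_le T hT2 a b hk0 x
    first
    | -- goal 1 : D < degreeF
      (have h1 : 1 ≤ T.card - 1 := by omega
       nlinarith)
    | -- goal 2 : the real inequality
      (rw [hT] at hlow hsens
       have hc1 : (1:ℝ) ≤ (p:ℝ) - 1 := by
         have : (2:ℝ) ≤ (p:ℝ) := by exact_mod_cast hp2
         linarith
       have hcpos : (0:ℝ) < ((p:ℝ) - 1) := by linarith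
       have hsR : (sens T (k * k) (fconstr T a b k) : ℝ) ≤ (k : ℝ) * ((p:ℝ) - 1) := by
         have := hsens
         have hcast : ((k * (p - 1) : ℕ) : ℝ) = (k : ℝ) * ((p:ℝ) - 1) := by
           push_cast [Nat.cast_sub (by omega : 1 ≤ p)]
           ring
         calc (sens T (k * k) (fconstr T a b k) : ℝ) ≤ ((k * (p - 1) : ℕ) : ℝ) := by
               exact_mod_cast this
           _ = (k : ℝ) * ((p:ℝ) - 1) := hcast
       have hdR : (k : ℝ) * k * ((p:ℝ) - 1) ≤ (degreeF T (k * k) (fconstr T a b k) : ℝ) := by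
         have hcast : ((k * k * (p - 1) : ℕ) : ℝ) = (k : ℝ) * k * ((p:ℝ) - 1) := by
           push_cast [Nat.cast_sub (by omega : 1 ≤ p)]
           ring
         calc (k : ℝ) * k * ((p:ℝ) - 1) = ((k * k * (p - 1) : ℕ) : ℝ) := hcast.symm
           _ ≤ _ := by exact_mod_cast hlow
       rw [div_le_iff₀ (by positivity)]
       have hsnn : (0:ℝ) ≤ (sens T (k * k) (fconstr T a b k) : ℝ) := Nat.cast_nonneg _
       have e1 : (sens T (k * k) (fconstr T a b k) : ℝ) ^ 2 ≤ ((k:ℝ) * ((p:ℝ) - 1)) ^ 2 :=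
         pow_le_pow_left₀ hsnn hsR 2
       have hcsq : (1:ℝ) ≤ ((p:ℝ) - 1) ^ 2 := by nlinarith
       have e2 : ((k:ℝ) * ((p:ℝ) - 1)) ^ 2 ≤ ((k:ℝ) * k * ((p:ℝ) - 1)) * ((p:ℝ) - 1) ^ 3 := by
         nlinarith [mul_nonneg (mul_nonneg (sq_nonneg ((k:ℝ))) (sq_nonneg ((p:ℝ) - 1)))
           (sub_nonneg.mpr hcsq)]
       have e4 : ((k:ℝ) * k * ((p:ℝ) - 1)) * ((p:ℝ) - 1) ^ 3
           ≤ (degreeF T (k * k) (fconstr T a b k) : ℝ) * ((p:ℝ) - 1) ^ 3 :=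
         mul_le_mul_of_nonneg_right hdR (by positivity)
       linarith)
  }
end
end

section
/- Let m ≥ 2. Suppose there exist constants μ > 0 and c > 0 such that for every n and every partition of the Hamming graph H(n,m) into (possibly empty) induced subgraphs H_1, …, H_m with Σ_{i=1}^{m} |V(H_i)|·ε^i ≠ 0, one has max{Δ(H_1),…,Δ(H_m)} ≥ c·n^μ. Then there exist constants μ' > 0 and c' > 0 such that for every n and every collection of (possibly empty) induced subgraphs H_{ε^0}, …, H_{ε^{m-1}} of H(n,m) whose vertex sets partition U_m^n and satisfy Σ_{k=0}^{m-1} |ρ(V(H_{ε^k}))|·ε^k ≠ 0, one has (m-1)·n − min{δ(H_{ε^k}) : 0 ≤ k ≤ m-1} ≥ c'·n^{μ'}. -/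
open scoped Classical

noncomputable section

/-- The primitive `m`-th root of unity `ε = e^{2πi/m}`. -/
def primRoot (m : ℕ) : ℂ := Complex.exp (2 * Real.pi * Complex.I / m)

/-- The bijection `k ↦ ε^k` from `ZMod m` onto the set `U_m` of `m`-th roots of unity;
vectors of `U_m^n` are modelled by their exponent vectors in `(ZMod m)^n`. -/
def uRoot (m : ℕ) (k : ZMod m) : ℂ := primRoot m ^ k.val

/-- `F` represents the `m`-ary function `U_m^n → U_m` given in exponents by `g`,
i.e. the function `(ε^{x 1}, …, ε^{x n}) ↦ ε^{g x}`. -/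
def RepresentsU (m n : ℕ) (F : MvPolynomial (Fin n) ℂ)
    (g : (Fin n → ZMod m) → ZMod m) : Prop :=
  ∀ x : Fin n → ZMod m, MvPolynomial.eval (fun i => uRoot m (x i)) F = uRoot m (g x)

/-- Degree of the `m`-ary function `U_m^n → U_m` given in exponents by `g`. -/
def degU (m n : ℕ) (g : (Fin n → ZMod m) → ZMod m) : ℕ :=
  sInf {d | ∃ F : MvPolynomial (Fin n) ℂ, RepresentsU m n F g ∧ F.totalDegree = d}

/-- Local sensitivity of the `m`-ary function `U_m^n → U_m` given in exponents by `g`. -/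
def localSensU (m n : ℕ) [NeZero m] (g : (Fin n → ZMod m) → ZMod m)
    (x : Fin n → ZMod m) : ℕ :=
  (Finset.univ.filter fun y : Fin n → ZMod m => hammingDist x y = 1 ∧ g y ≠ g x).card

/-- Sensitivity of the `m`-ary function `U_m^n → U_m` given in exponents by `g`. -/
def sensU (m n : ℕ) [NeZero m] (g : (Fin n → ZMod m) → ZMod m) : ℕ :=
  Finset.univ.sup (localSensU m n g)

/-- Degree of the vertex `v` in the subgraph of the Hamming graph induced on `V`:
the number of vertices of `V` at Hamming distance exactly `1` from `v`. -/
def indDeg {ι α : Type*} [Fintype ι] (V : Finset (ι → α)) (v : ι → α) : ℕ :=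
  (V.filter fun w => hammingDist v w = 1).card

/-- Minimum degree `δ` of the subgraph of the Hamming graph induced on `V`
(it is `⊤ = +∞` for the empty graph). -/
def minDeg {ι α : Type*} [Fintype ι] (V : Finset (ι → α)) : ℕ∞ :=
  V.inf fun v => (indDeg V v : ℕ∞)

/-- Maximum degree `Δ` of the subgraph of the Hamming graph induced on `V`. -/
def maxDeg {ι α : Type*} [Fintype ι] (V : Finset (ι → α)) : ℕ :=
  V.sup fun v => indDeg V v

/-- The rotation `ρ` applied to the part `V k` of a partition of `U_m^n` (in exponent
coordinates): `x ∈ ρ(V)_k` iff `x ∈ C_{ε^j} ∩ V_{ε^{k-j}}` for some `j`, where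
`C_{ε^j}` consists of the vertices whose entries multiply to `ε^j`, i.e. whose exponents
sum to `j`. -/
def rho (m n : ℕ) [NeZero m] (V : ZMod m → Finset (Fin n → ZMod m)) (k : ZMod m) :
    Finset (Fin n → ZMod m) :=
  Finset.univ.filter fun x => x ∈ V (k - ∑ i, x i)

/-!
A vertex `x ∈ ρ(V)_k` lies in `V_j` with `j = k - ∑ xᵢ`. A neighbour of `x` has a different
coordinate sum, so it cannot lie in both `ρ(V)_k` and `V_j`; hence the degrees of `x` in these
two induced subgraphs add up to at most `(m - 1) n`. Thus `Δ(ρ(V)_k) ≤ (m - 1) n - δ`, and the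
hypothesis applied to the partition `ρ(V)` gives the claim with the same constants.
-/

open Finset

section HammingNeighbors

variable {ι α : Type*} [Fintype ι]

lemma exists_eq_update_of_hammingDist_eq_one {x y : ι → α} (h : hammingDist x y = 1) :
    ∃ i, x i ≠ y i ∧ y = Function.update x i (y i) := by
  obtain ⟨i, hi⟩ := card_eq_one.mp h
  have hdiff : ∀ j, x j ≠ y j ↔ j = i := fun j => by
    simpa using Finset.ext_iff.mp hi j
  refine ⟨i, (hdiff i).mpr rfl, funext fun j => ?_⟩
  by_cases hji : j = i
  · subst hji; simp
  · simpa [Function.update_of_ne hji, eq_comm] using mt (hdiff j).mp hji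

lemma sum_ne_sum_of_hammingDist_eq_one [AddCommGroup α] {x y : ι → α}
    (h : hammingDist x y = 1) : ∑ i, y i ≠ ∑ i, x i := by
  obtain ⟨i, hxy, hy⟩ := exists_eq_update_of_hammingDist_eq_one h
  have hsub : y - x = Pi.single i (y i - x i) := by
    rw [hy]; ext j; by_cases hji : j = i <;> simp [hji]
  intro hsum
  have : ∑ j, (y - x) j = y i - x i := by rw [hsub]; simp
  rw [Pi.sub_def, sum_sub_distrib, hsum, sub_self] at this
  exact hxy (sub_eq_zero.mp this.symm).symm

variable [Fintype α]

lemma card_hammingDist_eq_one_le (x : ι → α) :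
    #(univ.filter fun y => hammingDist x y = 1) ≤ (Fintype.card α - 1) * Fintype.card ι := by
  have hsub : (univ.filter fun y => hammingDist x y = 1) ⊆
      univ.biUnion fun i => (univ.erase (x i)).image (Function.update x i) := by
    intro y hy
    obtain ⟨i, hxy, hy⟩ := exists_eq_update_of_hammingDist_eq_one (mem_filter.mp hy).2
    exact mem_biUnion.mpr ⟨i, mem_univ _,
      mem_image.mpr ⟨y i, mem_erase.mpr ⟨hxy.symm, mem_univ _⟩, hy.symm⟩⟩
  calc #(univ.filter fun y => hammingDist x y = 1)
      ≤ ∑ i, #((univ.erase (x i)).image (Function.update x i)) :=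
        (card_le_card hsub).trans card_biUnion_le
    _ ≤ ∑ _i : ι, (Fintype.card α - 1) := sum_le_sum fun i _ =>
        card_image_le.trans_eq (card_erase_of_mem (mem_univ _))
    _ = (Fintype.card α - 1) * Fintype.card ι := by simp [mul_comm]

lemma indDeg_add_indDeg_le {A B : Finset (ι → α)} {x : ι → α}
    (h : ∀ y ∈ A, y ∈ B → hammingDist x y ≠ 1) :
    indDeg A x + indDeg B x ≤ (Fintype.card α - 1) * Fintype.card ι := by
  have hdisj : Disjoint (A.filter fun y => hammingDist x y = 1)
      (B.filter fun y => hammingDist x y = 1) :=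
    disjoint_left.mpr fun y hyA hyB =>
      h y (mem_filter.mp hyA).1 (mem_filter.mp hyB).1 (mem_filter.mp hyA).2
  have hsub : (A.filter fun y => hammingDist x y = 1) ∪ (B.filter fun y => hammingDist x y = 1) ⊆
      univ.filter fun y => hammingDist x y = 1 := by
    intro y hy
    rcases mem_union.mp hy with hy | hy <;> simp_all
  rw [indDeg, indDeg, ← card_union_of_disjoint hdisj]
  exact (card_le_card hsub).trans (card_hammingDist_eq_one_le x)

end HammingNeighbors

section Rotation

variable {m n : ℕ} [NeZero m] {V : ZMod m → Finset (Fin n → ZMod m)}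

lemma mem_rho {k : ZMod m} {x : Fin n → ZMod m} : x ∈ rho m n V k ↔ x ∈ V (k - ∑ i, x i) := by
  simp [rho]

lemma existsUnique_mem_rho (hV : ∀ x, ∃! k, x ∈ V k) (x : Fin n → ZMod m) :
    ∃! k, x ∈ rho m n V k := by
  obtain ⟨j, hj, huniq⟩ := hV x
  refine ⟨j + ∑ i, x i, by simpa [mem_rho] using hj, fun k hk => ?_⟩
  rw [← huniq _ (mem_rho.mp hk), sub_add_cancel]

lemma indDeg_rho_add_indDeg_le (hV : ∀ x, ∃! k, x ∈ V k) {k : ZMod m} (x : Fin n → ZMod m) :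
    indDeg (rho m n V k) x + indDeg (V (k - ∑ i, x i)) x ≤ (m - 1) * n := by
  simpa using indDeg_add_indDeg_le fun y hyρ hyV hxy =>
    sum_ne_sum_of_hammingDist_eq_one hxy <| sub_right_injective <|
      (hV y).unique (mem_rho.mp hyρ) hyV

lemma maxDeg_rho_le (hV : ∀ x, ∃! k, x ∈ V k) (k : ZMod m) :
    maxDeg (rho m n V k) ≤
      ((((m - 1) * n : ℕ) : ℕ∞) - univ.inf fun j => minDeg (V j)).toNat := by
  refine Finset.sup_le fun x hx => ?_
  set δ := univ.inf fun j => minDeg (V j)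
  have hδ : δ ≤ indDeg (V (k - ∑ i, x i)) x :=
    (inf_le (mem_univ _)).trans (inf_le (mem_rho.mp hx))
  lift δ to ℕ using ne_top_of_le_ne_top (ENat.natCast_ne_top _) hδ with d
  have hdeg := indDeg_rho_add_indDeg_le hV (k := k) x
  rw [← ENat.natCast_sub, ENat.toNat_natCast]
  have : d ≤ indDeg (V (k - ∑ i, x i)) x := by exact_mod_cast hδ
  omega

end Rotation

theorem stmt18_general (m : ℕ) [NeZero m]
    (H : ∃ μ c : ℝ, 0 < μ ∧ 0 < c ∧
      ∀ (n : ℕ) (V : ZMod m → Finset (Fin n → ZMod m)),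
        (∀ x : Fin n → ZMod m, ∃! k : ZMod m, x ∈ V k) →
        (∑ k : ZMod m, ((V k).card : ℂ) * primRoot m ^ k.val) ≠ 0 →
        c * (n : ℝ) ^ μ ≤ ((Finset.univ.sup fun k : ZMod m => maxDeg (V k) : ℕ) : ℝ)) :
    ∃ μ' c' : ℝ, 0 < μ' ∧ 0 < c' ∧
      ∀ (n : ℕ) (V : ZMod m → Finset (Fin n → ZMod m)),
        (∀ x : Fin n → ZMod m, ∃! k : ZMod m, x ∈ V k) →
        (∑ k : ZMod m, ((rho m n V k).card : ℂ) * primRoot m ^ k.val) ≠ 0 →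
        c' * (n : ℝ) ^ μ' ≤
          ((((((m - 1) * n : ℕ) : ℕ∞) -
            Finset.univ.inf (fun k : ZMod m => minDeg (V k))).toNat : ℕ) : ℝ) := by
  obtain ⟨μ, c, hμ, hc, hH⟩ := H
  refine ⟨μ, c, hμ, hc, fun n V hV hsum => ?_⟩
  refine (hH n _ (existsUnique_mem_rho hV) hsum).trans ?_
  exact_mod_cast Finset.sup_le fun k _ => maxDeg_rho_le hV k

theorem stmt18 (m : ℕ) [NeZero m] (hm : 2 ≤ m)
    (H : ∃ μ c : ℝ, 0 < μ ∧ 0 < c ∧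
      ∀ (n : ℕ) (V : ZMod m → Finset (Fin n → ZMod m)),
        (∀ x : Fin n → ZMod m, ∃! k : ZMod m, x ∈ V k) →
        (∑ k : ZMod m, ((V k).card : ℂ) * primRoot m ^ k.val) ≠ 0 →
        c * (n : ℝ) ^ μ ≤ ((Finset.univ.sup fun k : ZMod m => maxDeg (V k) : ℕ) : ℝ)) :
    ∃ μ' c' : ℝ, 0 < μ' ∧ 0 < c' ∧
      ∀ (n : ℕ) (V : ZMod m → Finset (Fin n → ZMod m)),
        (∀ x : Fin n → ZMod m, ∃! k : ZMod m, x ∈ V k) →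
        (∑ k : ZMod m, ((rho m n V k).card : ℂ) * primRoot m ^ k.val) ≠ 0 →
        c' * (n : ℝ) ^ μ' ≤
          ((((((m - 1) * n : ℕ) : ℕ∞) -
            Finset.univ.inf (fun k : ZMod m => minDeg (V k))).toNat : ℕ) : ℝ) :=
  stmt18_general m H
end
end
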